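/- Let Y be a mean zero random variable with variance σ² ∈ (0,∞), and let Y* be defined on the same probability space and have the Y-zero biased distribution. Suppose Y* − Y ≤ c almost surely for some constant c > 0, and that the moment generating function m(s) = E[exp(sY)] is finite for all s ∈ [0, 1/c). Then for all t ≥ 0, P(Y ≥ t) ≤ exp(−t² / (2(σ² + ct))). -/

import Mathlib

/-!
A Herbst-type argument. Write `m` for the moment generating function of `Y`. The zero-bias
identity applied to `f x = exp (u * x)` gives `m' u = E[Y exp (u Y)] = σ² u E[exp (u Y*)]`,
and `Y* ≤ Y + c` bounds this by `σ² exp (u c) u m u`. On `[0, s]` this is the differential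
inequality `m' ≤ K u m` with `K = σ² exp (s c)`, so `m s ≤ exp (K s² / 2)`. Chernoff's bound
at `s = t / (σ² + c t)`, together with `exp (s c) ≤ 1 / (1 - s c) = (σ² + c t) / σ²`,
leaves the exponent `-s t / 2 = -t² / (2 (σ² + c t))`.
-/

open MeasureTheory ProbabilityTheory Real

/-- `Ystar` has the `Y`-zero biased distribution with respect to variance `σ2`:
`E[Y f(Y)] = σ2 * E[f'(Ystar)]` for every (absolutely continuous) differentiable
function `f` with derivative `f'` for which both expectations exist. -/
def ZeroBiased {Ω : Type*} [MeasurableSpace Ω] (μ : Measure Ω)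
    (Y Ystar : Ω → ℝ) (σ2 : ℝ) : Prop :=
  ∀ f f' : ℝ → ℝ, (∀ x, HasDerivAt f (f' x) x) →
    Integrable (fun ω => Y ω * f (Y ω)) μ →
    Integrable (fun ω => f' (Ystar ω)) μ →
    ∫ ω, Y ω * f (Y ω) ∂μ = σ2 * ∫ ω, f' (Ystar ω) ∂μ

open Set

lemma le_mul_exp_of_hasDerivAt_le_mul {f f' : ℝ → ℝ} {K a b : ℝ} (hab : a ≤ b)
    (hf : ContinuousOn f (Icc a b)) (hf' : ∀ u ∈ Ioo a b, HasDerivAt f (f' u) u)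
    (hle : ∀ u ∈ Ioo a b, f' u ≤ K * u * f u) :
    f b ≤ f a * exp (K * (b ^ 2 - a ^ 2) / 2) := by
  set g : ℝ → ℝ := fun u => f u * exp (-K / 2 * u ^ 2)
  have hg' : ∀ u ∈ Ioo a b,
      HasDerivAt g ((f' u - K * u * f u) * exp (-K / 2 * u ^ 2)) u := by
    intro u hu
    refine ((hf' u hu).mul ((hasDerivAt_pow 2 u).const_mul (-K / 2)).exp).congr_deriv ?_
    norm_num
    ring
  have hanti : AntitoneOn g (Icc a b) := by
    refine antitoneOn_of_deriv_nonpos (convex_Icc a b) (hf.mul (by fun_prop)) ?_ ?_ <;>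
      rw [interior_Icc]
    · exact fun u hu => (hg' u hu).differentiableAt.differentiableWithinAt
    · intro u hu
      rw [(hg' u hu).deriv]
      exact mul_nonpos_of_nonpos_of_nonneg (sub_nonpos.mpr (hle u hu)) (exp_pos _).le
  have hgab : g b ≤ g a := hanti (left_mem_Icc.mpr hab) (right_mem_Icc.mpr hab) hab
  calc f b = g b * exp (K / 2 * b ^ 2) := by
        rw [mul_assoc, ← exp_add]; ring_nf; rw [exp_zero, mul_one]
    _ ≤ g a * exp (K / 2 * b ^ 2) := by gcongr
    _ = f a * exp (K * (b ^ 2 - a ^ 2) / 2) := by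
      rw [mul_assoc, ← exp_add]; ring_nf

namespace ProbabilityTheory

variable {Ω : Type*} [MeasurableSpace Ω] {μ : Measure Ω} {X Y Z : Ω → ℝ} {a b c u : ℝ}

lemma continuousOn_mgf_Icc (ha : Integrable (fun ω => exp (a * X ω)) μ)
    (hb : Integrable (fun ω => exp (b * X ω)) μ) : ContinuousOn (mgf X μ) (Icc a b) := by
  refine continuousOn_of_dominated (bound := fun ω => exp (a * X ω) + exp (b * X ω))
    (fun u hu => (integrable_exp_mul_of_le_of_le ha hb hu.1 hu.2).aestronglyMeasurable)
    (fun u hu => ae_of_all _ fun ω => ?_) (ha.add hb) (ae_of_all _ fun ω => by fun_prop)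
  rw [norm_of_nonneg (exp_pos _).le]
  rcases le_total 0 (X ω) with h | h
  · exact (exp_le_exp.mpr (mul_le_mul_of_nonneg_right hu.2 h)).trans
      (le_add_of_nonneg_left (exp_pos _).le)
  · exact (exp_le_exp.mpr (mul_le_mul_of_nonpos_right hu.1 h)).trans
      (le_add_of_nonneg_right (exp_pos _).le)

lemma integrable_exp_mul_of_ae_sub_le (hZ : AEMeasurable Z μ)
    (hZX : ∀ᵐ ω ∂μ, Z ω - X ω ≤ c) (hu : 0 ≤ u) (hX : Integrable (fun ω => exp (u * X ω)) μ) :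
    Integrable (fun ω => exp (u * Z ω)) μ := by
  refine (hX.const_mul (exp (u * c))).mono' (aemeasurable_exp_mul u hZ) ?_
  filter_upwards [hZX] with ω hω
  rw [norm_of_nonneg (exp_pos _).le, ← exp_add]
  exact exp_le_exp.mpr (by nlinarith)

lemma mgf_le_exp_mul_mgf_of_ae_sub_le (hZX : ∀ᵐ ω ∂μ, Z ω - X ω ≤ c) (hu : 0 ≤ u)
    (hX : Integrable (fun ω => exp (u * X ω)) μ) :
    mgf Z μ u ≤ exp (u * c) * mgf X μ u := by
  rw [← mgf_const_add]
  refine mgf_mono_of_nonneg (by filter_upwards [hZX] with ω hω; linarith) hu ?_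
  simpa only [mul_add, exp_add] using hX.const_mul (exp (u * c))

lemma ZeroBiased.integral_mul_exp {Ystar : Ω → ℝ} {σ2 : ℝ} (hzb : ZeroBiased μ Y Ystar σ2)
    (hY : Integrable (fun ω => Y ω * exp (u * Y ω)) μ)
    (hYstar : Integrable (fun ω => exp (u * Ystar ω)) μ) :
    ∫ ω, Y ω * exp (u * Y ω) ∂μ = σ2 * u * mgf Ystar μ u := by
  have hf : ∀ x, HasDerivAt (fun x => exp (u * x)) (u * exp (u * x)) x := fun x =>
    ((hasDerivAt_id x).const_mul u).exp.congr_deriv (by simp [mul_comm])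
  rw [hzb _ _ hf hY (hYstar.const_mul u), integral_const_mul, mgf, mul_assoc]

theorem ZeroBiased.mgf_le [IsProbabilityMeasure μ] {Ystar : Ω → ℝ} {σ2 s : ℝ}
    (hzb : ZeroBiased μ Y Ystar σ2) (hσ2 : 0 ≤ σ2) (hYstar : AEMeasurable Ystar μ)
    (hc : 0 ≤ c) (hbdd : ∀ᵐ ω ∂μ, Ystar ω - Y ω ≤ c) (hs : 0 ≤ s)
    (hmgf : Integrable (fun ω => exp (s * Y ω)) μ) :
    mgf Y μ s ≤ exp (σ2 * exp (s * c) * s ^ 2 / 2) := by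
  have h0 : Integrable (fun ω => exp (0 * Y ω)) μ := by simp
  have hIcc : Icc 0 s ⊆ integrableExpSet Y μ := fun u hu =>
    integrable_exp_mul_of_le_of_le h0 hmgf hu.1 hu.2
  have hbound : ∀ u ∈ Ioo 0 s,
      ∫ ω, Y ω * exp (u * Y ω) ∂μ ≤ σ2 * exp (s * c) * u * mgf Y μ u := by
    intro u hu
    have hint : Integrable (fun ω => exp (u * Y ω)) μ := hIcc (Ioo_subset_Icc_self hu)
    have hint_mul : Integrable (fun ω => Y ω * exp (u * Y ω)) μ := by
      simpa using integrable_pow_mul_exp_of_mem_interior_integrableExpSet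
        (interior_mono hIcc (by rwa [interior_Icc])) 1
    rw [hzb.integral_mul_exp hint_mul (integrable_exp_mul_of_ae_sub_le hYstar hbdd hu.1.le hint)]
    calc σ2 * u * mgf Ystar μ u ≤ σ2 * u * (exp (u * c) * mgf Y μ u) := by
          gcongr
          exacts [mul_nonneg hσ2 hu.1.le, mgf_le_exp_mul_mgf_of_ae_sub_le hbdd hu.1.le hint]
      _ ≤ σ2 * u * (exp (s * c) * mgf Y μ u) := by
          gcongr; exacts [mul_nonneg hσ2 hu.1.le, mgf_nonneg, hu.2.le]
      _ = σ2 * exp (s * c) * u * mgf Y μ u := by ring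
  have := le_mul_exp_of_hasDerivAt_le_mul hs (continuousOn_mgf_Icc h0 hmgf)
    (fun u hu => hasDerivAt_mgf (interior_mono hIcc (by rwa [interior_Icc]))) hbound
  simpa [mgf_zero] using this

end ProbabilityTheory

lemma chernoff_exponent_le {σ2 c t s : ℝ} (hσ2 : 0 < σ2) (hc : 0 ≤ c) (ht : 0 ≤ t)
    (hst : s * (σ2 + c * t) = t) :
    -s * t + σ2 * exp (s * c) * s ^ 2 / 2 ≤ -(t ^ 2) / (2 * (σ2 + c * t)) := by
  have hden : 0 < σ2 + c * t := by positivity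
  have hs : 0 ≤ s := nonneg_of_mul_nonneg_left (by rwa [hst]) hden
  have hsc : 1 - s * c = σ2 / (σ2 + c * t) := by
    rw [eq_div_iff hden.ne']; linear_combination -c * hst
  have hK : σ2 * exp (s * c) ≤ σ2 + c * t := by
    have := exp_bound_div_one_sub_of_interval (x := s * c) (by positivity)
      (by rw [← sub_pos, hsc]; positivity)
    calc σ2 * exp (s * c) ≤ σ2 * (1 / (1 - s * c)) := by gcongr
      _ = σ2 + c * t := by rw [hsc]; field_simp
  have hrhs : -(t ^ 2) / (2 * (σ2 + c * t)) = -(s * t) / 2 := by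
    rw [div_eq_div_iff (by positivity) two_ne_zero]; linear_combination 2 * t * hst
  rw [hrhs]
  nlinarith [mul_le_mul_of_nonneg_right hK (sq_nonneg s)]

theorem zero_bias_right_tail
    {Ω : Type*} [MeasurableSpace Ω] (μ : Measure Ω) [IsProbabilityMeasure μ]
    (Y Ystar : Ω → ℝ) (hYstar : Measurable Ystar)
    (σ2 : ℝ) (hσ2 : 0 < σ2)
    (hzb : ZeroBiased μ Y Ystar σ2)
    (c : ℝ) (hc : 0 < c) (hbdd : ∀ᵐ ω ∂μ, Ystar ω - Y ω ≤ c)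
    (hmgf : ∀ s ∈ Set.Ico (0 : ℝ) (1 / c), Integrable (fun ω => exp (s * Y ω)) μ) :
    ∀ t : ℝ, 0 ≤ t →
      (μ {ω | t ≤ Y ω}).toReal ≤ exp (-(t ^ 2) / (2 * (σ2 + c * t))) := by
  intro t ht
  have hden : 0 < σ2 + c * t := by positivity
  set s := t / (σ2 + c * t)
  have hs : 0 ≤ s := by positivity
  have hint := hmgf s ⟨hs, by rw [div_lt_div_iff₀ hden hc]; nlinarith⟩
  have hst : s * (σ2 + c * t) = t := div_mul_cancel₀ t hden.ne'
  calc (μ {ω | t ≤ Y ω}).toReal ≤ exp (-s * t) * mgf Y μ s :=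
        measure_ge_le_exp_mul_mgf t hs hint
    _ ≤ exp (-s * t) * exp (σ2 * exp (s * c) * s ^ 2 / 2) := by
      gcongr
      exact hzb.mgf_le hσ2.le hYstar.aemeasurable hc.le hbdd hs hint
    _ = exp (-s * t + σ2 * exp (s * c) * s ^ 2 / 2) := (exp_add _ _).symm
    _ ≤ exp (-(t ^ 2) / (2 * (σ2 + c * t))) :=
        exp_le_exp.mpr (chernoff_exponent_le hσ2 hc.le ht hst)
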